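/- For any two words v and w over S, one has vS ∩ wS = (ww⁻¹v)S, where ww⁻¹v is the concatenation of w, its reversed-inverted word w⁻¹, and v. -/

import Mathlib

/-- The action of a word over `S` (a list of pairs `(p, ε)` with `p ∈ S` and
`ε ∈ {+1, −1}` encoded as a `Bool`) on subsets of `S`:
`p^{+1} X = {p x : x ∈ X}` and `p^{−1} X = {q ∈ S : p q ∈ X}`. -/
def wordAct {G : Type*} [Group G] (S : Set G) : List (G × Bool) → Set G → Set G
  | [], X => X
  | l :: w, X =>
    if l.2 then (fun x => l.1 * x) '' wordAct S w X
    else {q | q ∈ S ∧ l.1 * q ∈ wordAct S w X}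

/-- The reversed-inverted word `w⁻¹ = (pₙ^{−εₙ}, …, p₁^{−ε₁})`. -/
def wordInv {G : Type*} (w : List (G × Bool)) : List (G × Bool) :=
  (w.map fun l => (l.1, !l.2)).reverse

/-!
A positive letter `p` acts as the image under the injective map `x ↦ p x`, a negative letter as
the preimage under it, cut down to `S`. Each letter `l` therefore satisfies the projection formula
`l (Z ∩ l⁻¹ Y) = l Z ∩ Y` for `Z ⊆ S`, and by induction so does every word `w` over `S`, the
sets `w Z` staying inside `S`. Taking `Z = S` and `Y = v S` gives `w (w⁻¹ (v S)) = w S ∩ v S`.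
-/

section

variable {G : Type*}

theorem wordInv_cons (l : G × Bool) (w : List (G × Bool)) :
    wordInv (l :: w) = wordInv w ++ [(l.1, !l.2)] := by
  simp [wordInv]

theorem fst_mem_of_mem_wordInv {S : Set G} {w : List (G × Bool)} (hw : ∀ l ∈ w, l.1 ∈ S) :
    ∀ l ∈ wordInv w, l.1 ∈ S := by
  intro l hl
  obtain ⟨l', hl', rfl⟩ := List.mem_map.1 (List.mem_reverse.1 hl)
  exact hw l' hl'

variable [Group G]

theorem wordAct_append (S : Set G) (a b : List (G × Bool)) (X : Set G) :
    wordAct S (a ++ b) X = wordAct S a (wordAct S b X) := by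
  induction a with
  | nil => rfl
  | cons l a ih => simp only [List.cons_append, wordAct, ih]

theorem wordAct_subset (S : Submonoid G) {w : List (G × Bool)} (hw : ∀ l ∈ w, l.1 ∈ S)
    {X : Set G} (hX : X ⊆ S) : wordAct (S : Set G) w X ⊆ S := by
  induction w with
  | nil => exact hX
  | cons l w ih =>
    have ih := ih fun l hl => hw l (List.mem_cons_of_mem _ hl)
    rcases l with ⟨p, _ | _⟩
    · exact fun _ hq => hq.1
    · rintro _ ⟨x, hx, rfl⟩
      exact S.mul_mem (hw _ List.mem_cons_self) (ih hx)

theorem wordAct_singleton_inter_inv (S : Set G) (l : G × Bool) {Z : Set G} (hZ : Z ⊆ S)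
    (Y : Set G) : wordAct S [l] (Z ∩ wordAct S [(l.1, !l.2)] Y) = wordAct S [l] Z ∩ Y := by
  rcases l with ⟨p, _ | _⟩
  · ext q
    simp only [wordAct, Bool.not_false, if_true, Bool.false_eq_true, if_false, Set.mem_ofPred_eq,
      Set.mem_inter_iff, Set.mem_image, mul_right_inj, exists_eq_right]
    tauto
  · simp only [wordAct, Bool.not_true, if_true, Bool.false_eq_true, if_false]
    rw [← Set.image_inter_preimage]
    congr 1
    ext q
    simp only [Set.mem_inter_iff, Set.mem_ofPred_eq, Set.mem_preimage]
    exact ⟨fun h => ⟨h.1, h.2.2⟩, fun h => ⟨h.1, hZ h.1, h.2⟩⟩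

theorem wordAct_inter_wordInv (S : Submonoid G) {w : List (G × Bool)} (hw : ∀ l ∈ w, l.1 ∈ S)
    {Z : Set G} (hZ : Z ⊆ S) (Y : Set G) :
    wordAct (S : Set G) w (Z ∩ wordAct (S : Set G) (wordInv w) Y) =
      wordAct (S : Set G) w Z ∩ Y := by
  induction w generalizing Y with
  | nil => rfl
  | cons l w ih =>
    have hw' : ∀ l ∈ w, l.1 ∈ S := fun l hl => hw l (List.mem_cons_of_mem _ hl)
    rw [wordInv_cons, wordAct_append, ← List.singleton_append, wordAct_append, wordAct_append,
      ih hw', wordAct_singleton_inter_inv _ _ (wordAct_subset S hw' hZ)]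

end

/-- For any two words `v` and `w` over `S`, one has `vS ∩ wS = (ww⁻¹v)S`, where
`ww⁻¹v` is the concatenation of `w`, its reversed-inverted word `w⁻¹`, and `v`. -/
theorem word_inter_act {G : Type*} [Group G] (S : Submonoid G)
    (v w : List (G × Bool)) (hv : ∀ l ∈ v, l.1 ∈ S) (hw : ∀ l ∈ w, l.1 ∈ S) :
    wordAct (S : Set G) v (S : Set G) ∩ wordAct (S : Set G) w (S : Set G) =
      wordAct (S : Set G) (w ++ wordInv w ++ v) (S : Set G) := by
  have hvS : wordAct (S : Set G) v S ⊆ S := wordAct_subset S hv le_rfl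
  have hwvS : wordAct (S : Set G) (wordInv w) (wordAct S v S) ⊆ S :=
    wordAct_subset S (fst_mem_of_mem_wordInv hw) hvS
  rw [wordAct_append, wordAct_append, ← Set.inter_eq_right.mpr hwvS,
    wordAct_inter_wordInv S hw le_rfl, Set.inter_comm]
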